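/- arXiv:2409.05856 — 4 statements merged into one kernel-verified Lean document; each statement's English description precedes it below -/
import Mathlib

section
/- For every t ∈ (0,1), the Poisson kernel of the strip P(σ,t) = π·sin(πt)/(cosh(πσ) − cos(πt)) satisfies ∫_{-∞}^{∞} P(σ,t) dσ = 2π(1 − t). -/
/-!
With `θ = πt`, the substitution `x = πσ` reduces the claim to
`∫ sin θ / (cosh x - cos θ) dx = 2 (π - θ)`. The integrand has the antiderivative
`2 arctan ((eˣ - cos θ) / sin θ)`, which tends to `π` at `+∞` and to `-2 arctan (cot θ) = 2θ - π`
at `-∞`. Integrability needs no estimate: a nonnegative derivative of a function with finite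
limits at both ends is integrable.
-/

open Real MeasureTheory Filter Topology Set

theorem integrable_deriv_of_nonneg_of_tendsto {g g' : ℝ → ℝ} {m n : ℝ}
    (hderiv : ∀ x, HasDerivAt g (g' x) x) (hpos : ∀ x, 0 ≤ g' x)
    (hbot : Tendsto g atBot (𝓝 m)) (htop : Tendsto g atTop (𝓝 n)) : Integrable g' := by
  have hint : ∀ a b, IntervalIntegrable g' volume a b := fun a b =>
    intervalIntegral.intervalIntegrable_deriv_of_nonneg
      (fun x _ => (hderiv x).continuousAt.continuousWithinAt)
      (fun x _ => hderiv x) (fun x _ => hpos x)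
  refine integrable_of_intervalIntegral_norm_tendsto (n - m) (fun i => (hint (-i) i).1)
    tendsto_neg_atTop_atBot tendsto_id ?_
  have hsub : Tendsto (fun i => g i - g (-i)) atTop (𝓝 (n - m)) :=
    htop.sub (hbot.comp tendsto_neg_atTop_atBot)
  refine hsub.congr fun i => ?_
  simp only [Real.norm_of_nonneg (hpos _)]
  exact (intervalIntegral.integral_eq_sub_of_hasDerivAt (fun x _ => hderiv x) (hint _ _)).symm

theorem cos_lt_cosh_of_sin_ne_zero {θ : ℝ} (hθ : sin θ ≠ 0) (x : ℝ) : cos θ < cosh x := by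
  have hcos : cos θ < 1 := by
    have h1 := sin_sq_add_cos_sq θ
    have h2 : 0 < sin θ ^ 2 := by positivity
    nlinarith [neg_one_le_cos θ, cos_le_one θ]
  linarith [one_le_cosh x]

theorem hasDerivAt_two_mul_arctan_exp_sub_cos_div_sin {θ : ℝ} (hθ : sin θ ≠ 0) (x : ℝ) :
    HasDerivAt (fun x => 2 * arctan ((exp x - cos θ) / sin θ))
      (sin θ / (cosh x - cos θ)) x := by
  have h := (((hasDerivAt_exp x).sub_const (cos θ)).div_const (sin θ)).arctan.const_mul 2
  refine h.congr_deriv ?_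
  have hpyth := sin_sq_add_cos_sq θ
  set e := exp x
  have he : 0 < e := exp_pos x
  have hq : 0 < e ^ 2 - 2 * cos θ * e + 1 := by
    have : 0 < sin θ ^ 2 := by positivity
    nlinarith [sq_nonneg (e - cos θ)]
  have hcosh : cosh x - cos θ = (e ^ 2 - 2 * cos θ * e + 1) / (2 * e) := by
    rw [cosh_eq, exp_neg]
    field_simp
    ring
  have hsq : 1 + ((e - cos θ) / sin θ) ^ 2 = (e ^ 2 - 2 * cos θ * e + 1) / sin θ ^ 2 := by
    field_simp
    linear_combination hpyth
  rw [hcosh, hsq]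
  field_simp

theorem arctan_cos_div_sin {θ : ℝ} (hθ : θ ∈ Ioo 0 π) : arctan (cos θ / sin θ) = π / 2 - θ := by
  apply arctan_eq_of_tan_eq
  · rw [tan_pi_div_two_sub, tan_eq_sin_div_cos, inv_div]
  · constructor <;> linarith [hθ.1, hθ.2]

theorem integral_sin_div_cosh_sub_cos {θ : ℝ} (hθ : θ ∈ Ioo 0 π) :
    ∫ x, sin θ / (cosh x - cos θ) = 2 * (π - θ) := by
  have hsin : 0 < sin θ := sin_pos_of_pos_of_lt_pi hθ.1 hθ.2
  have hderiv := hasDerivAt_two_mul_arctan_exp_sub_cos_div_sin hsin.ne'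
  have htop : Tendsto (fun x => 2 * arctan ((exp x - cos θ) / sin θ)) atTop (𝓝 (2 * (π / 2))) :=
    ((tendsto_arctan_atTop.mono_right nhdsWithin_le_nhds).comp
      ((tendsto_exp_atTop.atTop_add (tendsto_const_nhds (x := -cos θ))).atTop_div_const
        hsin)).const_mul 2
  have hbot : Tendsto (fun x => 2 * arctan ((exp x - cos θ) / sin θ)) atBot
      (𝓝 (2 * arctan ((0 - cos θ) / sin θ))) :=
    (((continuous_arctan.tendsto _).comp
      ((tendsto_exp_atBot.sub_const _).div_const _))).const_mul 2
  have hpos : ∀ x, 0 ≤ sin θ / (cosh x - cos θ) := fun x =>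
    div_nonneg hsin.le (sub_pos.2 (cos_lt_cosh_of_sin_ne_zero hsin.ne' x)).le
  rw [integral_of_hasDerivAt_of_tendsto hderiv
    (integrable_deriv_of_nonneg_of_tendsto hderiv hpos hbot htop) hbot htop,
    zero_sub, neg_div, arctan_neg, arctan_cos_div_sin hθ]
  ring

/-- For every `t ∈ (0,1)`, the Poisson kernel of the strip
`P(σ,t) = π·sin(πt)/(cosh(πσ) − cos(πt))` satisfies `∫_{-∞}^{∞} P(σ,t) dσ = 2π(1 − t)`. -/
theorem poisson_kernel_strip_integral (t : ℝ) (ht : t ∈ Set.Ioo (0 : ℝ) 1) :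
    ∫ σ : ℝ, π * Real.sin (π * t) / (Real.cosh (π * σ) - Real.cos (π * t))
      = 2 * π * (1 - t) := by
  have hθ : π * t ∈ Ioo 0 π := ⟨mul_pos pi_pos ht.1, mul_lt_of_lt_one_right pi_pos ht.2⟩
  rw [Measure.integral_comp_mul_left (fun x => π * sin (π * t) / (cosh x - cos (π * t))),
    abs_of_pos (inv_pos.2 pi_pos)]
  simp only [mul_div_assoc, smul_eq_mul, integral_const_mul, integral_sin_div_cosh_sub_cos hθ]
  field_simp
end

section
/- Let M > 0, let n ≥ 1 be a real number, and let f₀, f₁ : ℝ → ℝ be continuous functions with |f₀(σ)| ≤ M and |f₁(σ)| ≤ M for all σ. Set ε = sup_{|σ| ≤ 2n} max(|f₀(σ)|, |f₁(σ)|) and define w(s,t) = (1/2π) ∫_{-∞}^{∞} ( P(σ−s,t)·f₀(σ) + P(σ−s,1−t)·f₁(σ) ) dσ for (s,t) ∈ ℝ × (0,1), where P(σ,t) = π·sin(πt)/(cosh(πσ) − cos(πt)). Then for all s with |s| ≤ n and all t ∈ (0,1), one has |w(s,t)| ≤ ε + 4M·e^{−n}. -/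
/-!
Write `P_t` for the kernel. The sum `P_t + P_{1-t}` is the derivative of
`2 arctan (sinh (π x) / sin (π t))`, so it is positive with total mass at most `2π`, and
`P_t x ≤ 2π e^{-|x|}` once `|x| ≥ 1`. Split the integral at `|σ - s| = n`: near `s` we have
`|σ| ≤ 2n`, so the data are bounded by `ε` and this part contributes at most `ε`; on the tails
the data are bounded by `M` and the kernels by `2π e^{-|σ - s|}`, which contributes at most
`(1/2π) · M · 4π · 2e^{-n} = 4M e^{-n}`.
-/

open Real MeasureTheory Set Filter

noncomputable def stripPoissonKernel (x t : ℝ) : ℝ :=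
  π * sin (π * t) / (cosh (π * x) - cos (π * t))

noncomputable def stripPoissonExtension (f₀ f₁ : ℝ → ℝ) (s t : ℝ) : ℝ :=
  1 / (2 * π) * ∫ σ,
    (stripPoissonKernel (σ - s) t * f₀ σ + stripPoissonKernel (σ - s) (1 - t) * f₁ σ)

lemma exp_add_two_le_exp_pi_mul {y : ℝ} (hy : 1 ≤ y) : exp y + 2 ≤ exp (π * y) := by
  have hexp : exp (π * y) = exp y * exp ((π - 1) * y) := by rw [← exp_add]; ring_nf
  have h3 : 3 ≤ exp ((π - 1) * y) := by
    nlinarith [add_one_le_exp ((π - 1) * y), pi_gt_three]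
  nlinarith [one_le_exp (by linarith : 0 ≤ y)]

section
variable {t : ℝ}

lemma sin_pi_mul_pos (ht : t ∈ Ioo 0 1) : 0 < sin (π * t) :=
  sin_pos_of_pos_of_lt_pi (mul_pos pi_pos ht.1) (by nlinarith [pi_pos, ht.2])

lemma abs_cos_pi_mul_lt_cosh (ht : t ∈ Ioo 0 1) (x : ℝ) : |cos (π * t)| < cosh x := by
  have hsin := sin_pi_mul_pos ht
  have hpyth := cos_sq_add_sin_sq (π * t)
  have : |cos (π * t)| < 1 := by
    rw [← sq_lt_one_iff_abs_lt_one]; nlinarith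
  linarith [one_le_cosh x]

lemma stripPoissonKernel_one_sub (x t : ℝ) :
    stripPoissonKernel x (1 - t) = π * sin (π * t) / (cosh (π * x) + cos (π * t)) := by
  rw [stripPoissonKernel, mul_one_sub, sin_pi_sub, cos_pi_sub, sub_neg_eq_add]

lemma stripPoissonKernel_pos (ht : t ∈ Ioo 0 1) (x : ℝ) : 0 < stripPoissonKernel x t :=
  div_pos (mul_pos pi_pos (sin_pi_mul_pos ht))
    (sub_pos.2 ((le_abs_self _).trans_lt (abs_cos_pi_mul_lt_cosh ht _)))

lemma continuous_stripPoissonKernel (ht : t ∈ Ioo 0 1) :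
    Continuous fun x ↦ stripPoissonKernel x t :=
  continuous_const.div (by fun_prop) fun x ↦
    (sub_pos.2 ((le_abs_self _).trans_lt (abs_cos_pi_mul_lt_cosh ht _))).ne'

-- The denominators multiply to `cosh² - cos² = sinh² + sin²`.
lemma stripPoissonKernel_add_one_sub (ht : t ∈ Ioo 0 1) (x : ℝ) :
    stripPoissonKernel x t + stripPoissonKernel x (1 - t)
      = 2 * π * sin (π * t) * cosh (π * x) / (sin (π * t) ^ 2 + sinh (π * x) ^ 2) := by
  have hlt := abs_cos_pi_mul_lt_cosh ht (π * x)
  have hsub : 0 < cosh (π * x) - cos (π * t) := by linarith [le_abs_self (cos (π * t))]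
  have hadd : 0 < cosh (π * x) + cos (π * t) := by linarith [neg_abs_le (cos (π * t))]
  have hden : 0 < sin (π * t) ^ 2 + sinh (π * x) ^ 2 := by
    have := sin_pi_mul_pos ht; positivity
  rw [stripPoissonKernel_one_sub, stripPoissonKernel, div_add_div _ _ hsub.ne' hadd.ne',
    div_eq_div_iff (by positivity) hden.ne']
  linear_combination (2 * π * sin (π * t) * cosh (π * x)) *
    (cos_sq_add_sin_sq (π * t) - cosh_sq' (π * x))

lemma hasDerivAt_two_mul_arctan_sinh_div (ht : t ∈ Ioo 0 1) (x : ℝ) :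
    HasDerivAt (fun y ↦ 2 * arctan (sinh (π * y) / sin (π * t)))
      (stripPoissonKernel x t + stripPoissonKernel x (1 - t)) x := by
  have hsin := sin_pi_mul_pos ht
  have h := ((((hasDerivAt_id x).const_mul π).sinh).div_const (sin (π * t))).arctan.const_mul 2
  refine h.congr_deriv ?_
  rw [stripPoissonKernel_add_one_sub ht, id]
  field_simp

lemma continuous_stripPoissonKernel_add_one_sub (ht : t ∈ Ioo 0 1) :
    Continuous fun x ↦ stripPoissonKernel x t + stripPoissonKernel x (1 - t) :=
  (continuous_stripPoissonKernel ht).add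
    (continuous_stripPoissonKernel (Ioo.one_sub_mem ht))

lemma intervalIntegral_stripPoissonKernel_add_one_sub_le (ht : t ∈ Ioo 0 1) (a b : ℝ) :
    ∫ x in a..b, (stripPoissonKernel x t + stripPoissonKernel x (1 - t)) ≤ 2 * π := by
  rw [intervalIntegral.integral_eq_sub_of_hasDerivAt
    (fun x _ ↦ hasDerivAt_two_mul_arctan_sinh_div ht x)
    ((continuous_stripPoissonKernel_add_one_sub ht).intervalIntegrable a b)]
  linarith [arctan_lt_pi_div_two (sinh (π * b) / sin (π * t)),
    neg_pi_div_two_lt_arctan (sinh (π * a) / sin (π * t))]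

lemma integrable_stripPoissonKernel_add_one_sub (ht : t ∈ Ioo 0 1) :
    Integrable fun x ↦ stripPoissonKernel x t + stripPoissonKernel x (1 - t) := by
  refine integrable_of_intervalIntegral_norm_bounded (2 * π)
    (fun _ ↦ (continuous_stripPoissonKernel_add_one_sub ht).integrableOn_Ioc)
    tendsto_neg_atTop_atBot tendsto_id (Eventually.of_forall fun i ↦ ?_)
  simp_rw [Real.norm_of_nonneg (add_pos (stripPoissonKernel_pos ht _)
    (stripPoissonKernel_pos (Ioo.one_sub_mem ht) _)).le]
  exact intervalIntegral_stripPoissonKernel_add_one_sub_le ht _ _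

lemma integral_stripPoissonKernel_add_one_sub_le (ht : t ∈ Ioo 0 1) :
    ∫ x, (stripPoissonKernel x t + stripPoissonKernel x (1 - t)) ≤ 2 * π :=
  le_of_tendsto' (intervalIntegral_tendsto_integral (integrable_stripPoissonKernel_add_one_sub ht)
    tendsto_neg_atTop_atBot tendsto_id) fun _ ↦
      intervalIntegral_stripPoissonKernel_add_one_sub_le ht _ _

lemma stripPoissonKernel_le_two_pi_mul_exp (ht : t ∈ Ioo 0 1) {x : ℝ} (hx : 1 ≤ |x|) :
    stripPoissonKernel x t ≤ 2 * π * exp (-|x|) := by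
  have hden : exp |x| ≤ 2 * (cosh (π * x) - cos (π * t)) := by
    rw [← cosh_abs, abs_mul, abs_of_pos pi_pos, cosh_eq]
    linarith [exp_add_two_le_exp_pi_mul hx, exp_pos (-(π * |x|)),
      (abs_cos_pi_mul_lt_cosh ht 0).trans_eq cosh_zero, le_abs_self (cos (π * t))]
  calc stripPoissonKernel x t ≤ π * 1 / (cosh (π * x) - cos (π * t)) := by
        have := sin_le_one (π * t)
        have := exp_pos |x|
        unfold stripPoissonKernel; gcongr; linarith
    _ = 2 * π / (2 * (cosh (π * x) - cos (π * t))) := by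
        rw [mul_div_mul_left _ _ two_ne_zero, mul_one]
    _ ≤ 2 * π / exp |x| := by gcongr
    _ = 2 * π * exp (-|x|) := by rw [exp_neg, div_eq_mul_inv]

end

lemma integral_indicator_Ioi_exp_neg_abs {n : ℝ} (hn : 0 ≤ n) :
    ∫ x, (Ioi n).indicator (fun y ↦ exp (-y)) |x| = 2 * exp (-n) := by
  rw [integral_comp_abs (f := (Ioi n).indicator fun y ↦ exp (-y)),
    setIntegral_indicator measurableSet_Ioi, Ioi_inter_Ioi, max_eq_right hn, integral_exp_neg_Ioi]

lemma integrable_indicator_Ioi_exp_neg_abs {n : ℝ} (hn : 0 ≤ n) :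
    Integrable fun x ↦ (Ioi n).indicator (fun y ↦ exp (-y)) |x| :=
  Integrable.of_integral_ne_zero (by rw [integral_indicator_Ioi_exp_neg_abs hn]; positivity)

lemma abs_stripPoissonKernel_mul_add_le {M n ε t x a b : ℝ} (hn : 1 ≤ n) (ht : t ∈ Ioo 0 1)
    (hε : 0 ≤ ε) (hM₀ : |a| ≤ M) (hM₁ : |b| ≤ M) (hε₀ : |x| ≤ n → |a| ≤ ε)
    (hε₁ : |x| ≤ n → |b| ≤ ε) :
    |stripPoissonKernel x t * a + stripPoissonKernel x (1 - t) * b|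
      ≤ ε * (stripPoissonKernel x t + stripPoissonKernel x (1 - t))
        + 4 * π * M * (Ioi n).indicator (fun y ↦ exp (-y)) |x| := by
  have hP := stripPoissonKernel_pos ht x
  have hQ := stripPoissonKernel_pos (Ioo.one_sub_mem ht) x
  have hM : 0 ≤ M := (abs_nonneg a).trans hM₀
  have htri : |stripPoissonKernel x t * a + stripPoissonKernel x (1 - t) * b|
      ≤ stripPoissonKernel x t * |a| + stripPoissonKernel x (1 - t) * |b| := by
    simpa only [abs_mul, abs_of_pos hP, abs_of_pos hQ] using
      abs_add_le (stripPoissonKernel x t * a) (stripPoissonKernel x (1 - t) * b)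
  rcases le_or_gt |x| n with hnear | hfar
  · have hT : 0 ≤ (Ioi n).indicator (fun y ↦ exp (-y)) |x| :=
      indicator_nonneg (fun y _ ↦ (exp_pos (-y)).le) _
    have := mul_nonneg (mul_nonneg (by positivity : (0 : ℝ) ≤ 4 * π) hM) hT
    linarith [mul_le_mul_of_nonneg_left (hε₀ hnear) hP.le,
      mul_le_mul_of_nonneg_left (hε₁ hnear) hQ.le]
  · have hfar' : 1 ≤ |x| := hn.trans hfar.le
    have := mul_nonneg hε (add_pos hP hQ).le
    rw [indicator_of_mem (show |x| ∈ Ioi n from hfar)]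
    linarith [mul_le_mul (stripPoissonKernel_le_two_pi_mul_exp ht hfar') hM₀ (abs_nonneg _)
        (by positivity),
      mul_le_mul (stripPoissonKernel_le_two_pi_mul_exp (Ioo.one_sub_mem ht) hfar') hM₁
        (abs_nonneg _) (by positivity)]

theorem abs_stripPoissonExtension_le {M n ε s t : ℝ} (hn : 1 ≤ n) (ht : t ∈ Ioo 0 1)
    {f₀ f₁ : ℝ → ℝ} (hM₀ : ∀ σ, |f₀ σ| ≤ M) (hM₁ : ∀ σ, |f₁ σ| ≤ M)
    (hε₀ : ∀ σ, |σ - s| ≤ n → |f₀ σ| ≤ ε) (hε₁ : ∀ σ, |σ - s| ≤ n → |f₁ σ| ≤ ε) :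
    |stripPoissonExtension f₀ f₁ s t| ≤ ε + 4 * M * exp (-n) := by
  set K : ℝ → ℝ := fun x ↦ stripPoissonKernel x t + stripPoissonKernel x (1 - t)
  set T : ℝ → ℝ := fun x ↦ (Ioi n).indicator (fun y ↦ exp (-y)) |x|
  have hε : 0 ≤ ε :=
    (abs_nonneg _).trans (hε₀ s (by rw [sub_self, abs_zero]; linarith))
  have hK : Integrable K := integrable_stripPoissonKernel_add_one_sub ht
  have hT : Integrable T := integrable_indicator_Ioi_exp_neg_abs (by linarith)
  have hmajorant : Integrable fun σ ↦ ε * K (σ - s) + 4 * π * M * T (σ - s) :=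
    ((hK.comp_sub_right s).const_mul ε).add ((hT.comp_sub_right s).const_mul _)
  have hmass : ∫ σ, (ε * K (σ - s) + 4 * π * M * T (σ - s))
      ≤ 2 * π * ε + 8 * π * M * exp (-n) := by
    rw [integral_add ((hK.comp_sub_right s).const_mul ε) ((hT.comp_sub_right s).const_mul _),
      integral_const_mul, integral_const_mul, integral_sub_right_eq_self K s,
      integral_sub_right_eq_self T s, integral_indicator_Ioi_exp_neg_abs (by linarith)]
    linarith [mul_le_mul_of_nonneg_left (integral_stripPoissonKernel_add_one_sub_le ht) hε]
  have hintegral := norm_integral_le_of_norm_le hmajorant (ae_of_all _ fun σ ↦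
    (Real.norm_eq_abs _).trans_le
      (abs_stripPoissonKernel_mul_add_le hn ht hε (hM₀ σ) (hM₁ σ) (hε₀ σ) (hε₁ σ)))
  rw [stripPoissonExtension, abs_mul, abs_of_pos (by positivity), ← Real.norm_eq_abs]
  calc _ ≤ 1 / (2 * π) * (2 * π * ε + 8 * π * M * exp (-n)) := by
        gcongr; exact hintegral.trans hmass
    _ = ε + 4 * M * exp (-n) := by field_simp; ring

theorem poisson_extension_interior_bound_general
    (M n : ℝ) (hn : 1 ≤ n)
    (f₀ f₁ : ℝ → ℝ)
    (hb₀ : ∀ σ, |f₀ σ| ≤ M) (hb₁ : ∀ σ, |f₁ σ| ≤ M)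
    (ε : ℝ)
    (hε : ε = sSup ((fun σ => max |f₀ σ| |f₁ σ|) '' Set.Icc (-(2 * n)) (2 * n)))
    (s t : ℝ) (hs : |s| ≤ n) (ht : t ∈ Set.Ioo (0 : ℝ) 1) :
    |(1 / (2 * π)) * ∫ σ : ℝ,
        (π * Real.sin (π * t) / (Real.cosh (π * (σ - s)) - Real.cos (π * t)) * f₀ σ
          + π * Real.sin (π * (1 - t)) / (Real.cosh (π * (σ - s)) - Real.cos (π * (1 - t)))
              * f₁ σ)|
      ≤ ε + 4 * M * Real.exp (-n) := by
  have hbdd : BddAbove ((fun σ ↦ max |f₀ σ| |f₁ σ|) '' Icc (-(2 * n)) (2 * n)) :=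
    ⟨M, by rintro _ ⟨σ, -, rfl⟩; exact max_le (hb₀ σ) (hb₁ σ)⟩
  have hnear : ∀ σ, |σ - s| ≤ n → max |f₀ σ| |f₁ σ| ≤ ε := fun σ hσ ↦ by
    rw [abs_le] at hs hσ
    exact hε ▸ le_csSup hbdd (mem_image_of_mem _ ⟨by linarith, by linarith⟩)
  exact abs_stripPoissonExtension_le hn ht hb₀ hb₁
    (fun σ hσ ↦ (le_max_left _ _).trans (hnear σ hσ))
    (fun σ hσ ↦ (le_max_right _ _).trans (hnear σ hσ))

/-- If `|f₀|, |f₁| ≤ M` everywhere and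
`ε = sup_{|σ| ≤ 2n} max(|f₀(σ)|, |f₁(σ)|)`, then the harmonic extension
`w(s,t) = (1/2π) ∫ ( P(σ−s,t) f₀(σ) + P(σ−s,1−t) f₁(σ) ) dσ` satisfies
`|w(s,t)| ≤ ε + 4M e^{−n}` for `|s| ≤ n`, `t ∈ (0,1)`. -/
theorem poisson_extension_interior_bound
    (M n : ℝ) (hM : 0 < M) (hn : 1 ≤ n)
    (f₀ f₁ : ℝ → ℝ) (hc₀ : Continuous f₀) (hc₁ : Continuous f₁)
    (hb₀ : ∀ σ, |f₀ σ| ≤ M) (hb₁ : ∀ σ, |f₁ σ| ≤ M)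
    (ε : ℝ)
    (hε : ε = sSup ((fun σ => max |f₀ σ| |f₁ σ|) '' Set.Icc (-(2 * n)) (2 * n)))
    (s t : ℝ) (hs : |s| ≤ n) (ht : t ∈ Set.Ioo (0 : ℝ) 1) :
    |(1 / (2 * π)) * ∫ σ : ℝ,
        (π * Real.sin (π * t) / (Real.cosh (π * (σ - s)) - Real.cos (π * t)) * f₀ σ
          + π * Real.sin (π * (1 - t)) / (Real.cosh (π * (σ - s)) - Real.cos (π * (1 - t)))
              * f₁ σ)|
      ≤ ε + 4 * M * Real.exp (-n) :=
  poisson_extension_interior_bound_general M n hn f₀ f₁ hb₀ hb₁ ε hε s t hs ht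
end

section
/- For R ≥ 2, define φ_R : (−R,R) × [0,1] → ℂ by φ_R(s,t) = (i/R²)·( c^{i(s+it)} + 1 )^{−1}, where c = R²/(R²−1) and c^{z} := exp(z·log c). Then (a) for all R ≥ 2 and all (s,t) ∈ (−R,R) × [0,1], the denominator c^{i(s+it)} + 1 is nonzero, so φ_R is well defined; and (b) sup_{(s,t) ∈ (−R,R) × [0,1]} |φ_R(s,t)| → 0 as R → ∞. -/
/-- The local model `φ_R(s,t) = (i/R²)·( c^{i(s+it)} + 1 )⁻¹` for the Reidemeister II move,
with `c = R²/(R²−1)` and `c^z = exp(z·log c)`. -/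
noncomputable def phiR (R s t : ℝ) : ℂ :=
  (Complex.I / (R : ℂ) ^ 2) *
    (Complex.exp (Complex.I * ((s : ℂ) + (t : ℂ) * Complex.I)
        * ((Real.log (R ^ 2 / (R ^ 2 - 1)) : ℝ) : ℂ)) + 1)⁻¹

/-!
Write `L = log (R²/(R²-1))`. The exponent `i(s+it)L` has imaginary part `sL`, and
`|sL| ≤ R·L ≤ R/(R²-1) ≤ 1 < π/2` for `R ≥ 2`, so `c^{i(s+it)}` lies in the closed right
half-plane. Hence `c^{i(s+it)} + 1` has real part, and so norm, at least `1`, which gives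
both that it does not vanish and that `|φ_R| ≤ 1/R²`.
-/

open Complex

lemma Complex.one_le_re_exp_add_one {z : ℂ} (hz : |z.im| ≤ Real.pi / 2) :
    1 ≤ (exp z + 1).re := by
  obtain ⟨hlo, hhi⟩ := abs_le.mp hz
  have hcos : 0 ≤ Real.cos z.im := Real.cos_nonneg_of_neg_pi_div_two_le_of_le hlo hhi
  rw [add_re, one_re, exp_re]
  nlinarith [Real.exp_pos z.re]

lemma Complex.one_le_norm_exp_add_one {z : ℂ} (hz : |z.im| ≤ Real.pi / 2) :
    1 ≤ ‖exp z + 1‖ :=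
  (one_le_re_exp_add_one hz).trans (re_le_norm _)

lemma Real.log_div_sub_one_le {a : ℝ} (ha : 1 < a) : Real.log (a / (a - 1)) ≤ 1 / (a - 1) := by
  have hpos : 0 < a - 1 := sub_pos.mpr ha
  calc Real.log (a / (a - 1)) ≤ a / (a - 1) - 1 := Real.log_le_sub_one_of_pos (by positivity)
    _ = 1 / (a - 1) := by field_simp; ring

lemma abs_mul_log_sq_div_sq_sub_one_le_one {R s : ℝ} (hR : 2 ≤ R) (hs : |s| ≤ R) :
    |s * Real.log (R ^ 2 / (R ^ 2 - 1))| ≤ 1 := by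
  have hR2 : 1 < R ^ 2 := by nlinarith
  have hpos : 0 < R ^ 2 - 1 := sub_pos.mpr hR2
  have hL₀ : 0 ≤ Real.log (R ^ 2 / (R ^ 2 - 1)) :=
    Real.log_nonneg ((one_le_div hpos).mpr (by linarith))
  calc |s * Real.log (R ^ 2 / (R ^ 2 - 1))| = |s| * Real.log (R ^ 2 / (R ^ 2 - 1)) := by
        rw [abs_mul, abs_of_nonneg hL₀]
    _ ≤ R * (1 / (R ^ 2 - 1)) :=
        mul_le_mul hs (Real.log_div_sub_one_le hR2) hL₀ (by linarith)
    _ ≤ 1 := by rw [mul_one_div, div_le_one hpos]; nlinarith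

lemma one_le_norm_exp_mul_log_sq_div_sq_sub_one_add_one {R s : ℝ} (t : ℝ) (hR : 2 ≤ R)
    (hs : |s| ≤ R) :
    1 ≤ ‖exp (I * ((s : ℂ) + (t : ℂ) * I) * ((Real.log (R ^ 2 / (R ^ 2 - 1)) : ℝ) : ℂ)) + 1‖ := by
  apply one_le_norm_exp_add_one
  have him : (I * ((s : ℂ) + (t : ℂ) * I) * ((Real.log (R ^ 2 / (R ^ 2 - 1)) : ℝ) : ℂ)).im =
      s * Real.log (R ^ 2 / (R ^ 2 - 1)) := by
    simp
  rw [him]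
  linarith [abs_mul_log_sq_div_sq_sub_one_le_one hR hs, Real.pi_gt_three]

lemma norm_phiR_le {R s : ℝ} (t : ℝ) (hR : 2 ≤ R) (hs : |s| ≤ R) :
    ‖phiR R s t‖ ≤ 1 / R ^ 2 := by
  have hden := one_le_norm_exp_mul_log_sq_div_sq_sub_one_add_one t hR hs
  rw [phiR, norm_mul, norm_div, norm_I, norm_pow, norm_real, Real.norm_of_nonneg (by linarith),
    norm_inv]
  exact mul_le_of_le_one_right (by positivity) (inv_le_one_of_one_le₀ hden)

/-- (a) For `R ≥ 2` the denominator `c^{i(s+it)} + 1` never vanishes on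
`(−R,R) × [0,1]`, so `φ_R` is well defined there; and
(b) `sup_{(s,t) ∈ (−R,R) × [0,1]} |φ_R(s,t)| → 0` as `R → ∞`. -/
theorem phiR_well_defined_and_sup_tendsto_zero :
    (∀ R : ℝ, 2 ≤ R → ∀ s t : ℝ, s ∈ Set.Ioo (-R) R → t ∈ Set.Icc (0 : ℝ) 1 →
      Complex.exp (Complex.I * ((s : ℂ) + (t : ℂ) * Complex.I)
          * ((Real.log (R ^ 2 / (R ^ 2 - 1)) : ℝ) : ℂ)) + 1 ≠ 0) ∧
    Filter.Tendsto
      (fun R : ℝ =>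
        sSup ((fun p : ℝ × ℝ => ‖phiR R p.1 p.2‖) ''
          (Set.Ioo (-R) R ×ˢ Set.Icc (0 : ℝ) 1)))
      Filter.atTop (nhds 0) := by
  refine ⟨fun R hR s t hs _ hzero => ?_, ?_⟩
  · have := one_le_norm_exp_mul_log_sq_div_sq_sub_one_add_one t hR (abs_lt.mpr hs).le
    rw [hzero, norm_zero] at this
    norm_num at this
  have hsup_le : ∀ᶠ R in Filter.atTop, sSup ((fun p : ℝ × ℝ => ‖phiR R p.1 p.2‖) ''
      (Set.Ioo (-R) R ×ˢ Set.Icc (0 : ℝ) 1)) ≤ 1 / R ^ 2 := by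
    filter_upwards [Filter.eventually_ge_atTop 2] with R hR
    refine Real.sSup_le ?_ (by positivity)
    rintro _ ⟨⟨s, t⟩, ⟨hs, _⟩, rfl⟩
    exact norm_phiR_le t hR (abs_lt.mpr hs).le
  have hsup_nonneg : ∀ᶠ R in Filter.atTop, 0 ≤ sSup ((fun p : ℝ × ℝ => ‖phiR R p.1 p.2‖) ''
      (Set.Ioo (-R) R ×ˢ Set.Icc (0 : ℝ) 1)) :=
    Filter.Eventually.of_forall fun R => Real.sSup_nonneg (by
      rintro _ ⟨_, _, rfl⟩
      exact norm_nonneg _)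
  have hbound : Filter.Tendsto (fun R : ℝ => 1 / R ^ 2) Filter.atTop (nhds 0) := by
    simpa only [one_div, Pi.inv_def] using (Filter.tendsto_pow_atTop two_ne_zero).inv_tendsto_atTop
  exact squeeze_zero' hsup_nonneg hsup_le hbound
end

section
/- With A, d, ĥ as above (tensor algebra on {x_i} ∪ {a,b}, odd graded derivations d, ĥ with d(a)=b, d(b)=0, d(x_i) in the subalgebra on the x's, ĥ(b)=a, ĥ(a)=0, ĥ(x_i)=0), define a linear map h : A → A on each word w by h(w) = (1/n(w))·ĥ(w) if n(w) ≠ 0, and h(w) = 0 if n(w) = 0, where n(w) counts the occurrences of a and b in w. Then h ∘ d + d ∘ h = id − τ, where τ : A → A is the linear projection that fixes every word containing only letters from {x_i} and annihilates every word containing at least one a or b. In particular, the inclusion of the subalgebra generated by {x_i} into A is a quasi-isomorphism of chain complexes (with differential d). -/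
/-- The monomial (word) in the free (tensor) algebra on the generating set `I ⊕ Bool`,
where `Sum.inl i` is the generator `x_i`, `Sum.inr true` is `a` and `Sum.inr false` is `b`. -/
noncomputable def mono {I : Type*} (w : List (I ⊕ Bool)) : FreeAlgebra ℚ (I ⊕ Bool) :=
  (w.map (FreeAlgebra.ι ℚ)).prod

/-- The degree of a word: the sum of the degrees of its letters. -/
def degw {I : Type*} (g : (I ⊕ Bool) → ℤ) (w : List (I ⊕ Bool)) : ℤ := (w.map g).sum

/-- `n(w)`: the number of letters of the word `w` equal to `a` or `b`. -/
def nab {I : Type*} (w : List (I ⊕ Bool)) : ℕ := w.countP Sum.isRight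

/-!
Put `D = ĥ ∘ d + d ∘ ĥ`. As the graded commutator of two odd derivations, `D` is an ordinary
derivation; it fixes `a` and `b` and kills every `x_i` (because `d x_i` lies in the
`x`-subalgebra, on which `ĥ` vanishes), so it is the Euler operator `D w = n(w) • w`.
Since `d` preserves `n`, on words with `n(w) = n ≠ 0` we get `h d + d h = D / n = id`, while for
`n = 0` both sides vanish. The quasi-isomorphism statements follow formally from the homotopy
identity, because `τ` lands in the `x`-subalgebra and `h` vanishes there.
-/

section SkewDerivation

variable {R A : Type*} [CommRing R] [Ring A] [Algebra R A]

/-- `d` is odd for the grading whose parity involution is `σ`. -/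
def IsSkewDerivation (σ : A →ₐ[R] A) (d : A →ₗ[R] A) : Prop :=
  ∀ z y, d (z * y) = d z * y + σ z * d y

namespace IsSkewDerivation

variable {σ : A →ₐ[R] A} {d e : A →ₗ[R] A}

theorem map_one_eq_zero (hd : IsSkewDerivation σ d) : d 1 = 0 := by
  simpa using hd 1 1

theorem map_eq_zero_of_mem_adjoin (hd : IsSkewDerivation σ d) {S : Set A}
    (hS : ∀ s ∈ S, d s = 0) {z : A} (hz : z ∈ Algebra.adjoin R S) : d z = 0 := by
  induction hz using Algebra.adjoin_induction with
  | mem s hs => exact hS s hs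
  | algebraMap r => rw [Algebra.algebraMap_eq_smul_one, map_smul, hd.map_one_eq_zero, smul_zero]
  | add a b _ _ ha hb => rw [map_add, ha, hb, add_zero]
  | mul a b _ _ ha hb => rw [hd, ha, hb, zero_mul, mul_zero, add_zero]

/-- Expanding `d (d (z * y)) = 0` leaves `(σ (d z) + d (σ z)) * d y = 0`. -/
theorem anticomm_of_sq_eq_zero [NoZeroDivisors A] (hd : IsSkewDerivation σ d)
    (hdd : ∀ x, d (d x) = 0) {y : A} (hy : d y ≠ 0) (z : A) : σ (d z) = -d (σ z) := by
  have h := hdd (z * y)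
  rw [hd, map_add, hd, hd, hdd, hdd, zero_mul, mul_zero, zero_add, add_zero, ← add_mul] at h
  exact eq_neg_of_add_eq_zero_left ((mul_eq_zero.mp h).resolve_right hy)

theorem anticomm_of_adjoin_eq_top (he : IsSkewDerivation σ e) {S : Set A}
    (hS : Algebra.adjoin R S = ⊤) (hgen : ∀ s ∈ S, σ (e s) = -e (σ s)) (z : A) :
    σ (e z) = -e (σ z) := by
  have hz : z ∈ Algebra.adjoin R S := hS ▸ Algebra.mem_top
  induction hz using Algebra.adjoin_induction with
  | mem s hs => exact hgen s hs
  | algebraMap r => simp [Algebra.algebraMap_eq_smul_one, he.map_one_eq_zero]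
  | add a b _ _ ha hb => rw [map_add, map_add, ha, hb, map_add, map_add, neg_add]
  | mul a b _ _ ha hb =>
    rw [he, map_add, map_mul, map_mul, ha, hb, map_mul, he]
    noncomm_ring

theorem comp_add_comp_leibniz (hd : IsSkewDerivation σ d) (he : IsSkewDerivation σ e)
    (hσ : ∀ z, σ (σ z) = z) (hσd : ∀ z, σ (d z) = -d (σ z)) (hσe : ∀ z, σ (e z) = -e (σ z))
    (z y : A) :
    e (d (z * y)) + d (e (z * y)) = (e (d z) + d (e z)) * y + z * (e (d y) + d (e y)) := by
  rw [hd, he, map_add, map_add, he, he, hd, hd, hσ, hσd, hσe]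
  noncomm_ring

end IsSkewDerivation

end SkewDerivation

section ChainHomotopy

variable {R M : Type*} [CommRing R] [AddCommGroup M] [Module R M] {d h τ : M →ₗ[R] M}
  {p : Submodule R M}

theorem exists_cycle_mem_add_boundary (hom : ∀ x, h (d x) + d (h x) = x - τ x)
    (hdd : ∀ x, d (d x) = 0) (hτ : ∀ x, τ x ∈ p) {x : M} (hx : d x = 0) :
    ∃ s ∈ p, d s = 0 ∧ ∃ y, x = s + d y := by
  have hxτ : x = τ x + d (h x) := by
    have := hom x
    rw [hx, map_zero, zero_add] at this
    rw [this, add_sub_cancel]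
  refine ⟨τ x, hτ x, ?_, h x, hxτ⟩
  rw [eq_sub_of_add_eq hxτ.symm, map_sub, hx, hdd, sub_zero]

theorem exists_preimage_mem_of_boundary (hom : ∀ x, h (d x) + d (h x) = x - τ x)
    (hdd : ∀ x, d (d x) = 0) (hτ : ∀ x, τ x ∈ p) (hp : ∀ s ∈ p, h s = 0) {y : M}
    (hy : d y ∈ p) : ∃ y' ∈ p, d y' = d y := by
  refine ⟨τ y, hτ y, ?_⟩
  have := congrArg d (hom y)
  rw [map_add, hdd, add_zero, hp _ hy, map_zero, map_sub] at this
  exact (sub_eq_zero.1 this.symm).symm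

end ChainHomotopy

section Words

variable {I : Type*}

open FreeAlgebra
open scoped Pointwise

theorem mono_append (u v : List (I ⊕ Bool)) : mono (u ++ v) = mono u * mono v := by
  simp [mono]

theorem mono_cons (l : I ⊕ Bool) (w : List (I ⊕ Bool)) : mono (l :: w) = ι ℚ l * mono w := by
  simp [mono]

theorem mono_singleton (l : I ⊕ Bool) : mono [l] = ι ℚ l := by
  simp [mono]

theorem nab_append (u v : List (I ⊕ Bool)) : nab (u ++ v) = nab u + nab v :=
  List.countP_append

theorem span_range_mono : Submodule.span ℚ (Set.range (mono (I := I))) = ⊤ := by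
  rw [eq_top_iff]
  rintro x -
  induction x using FreeAlgebra.induction with
  | grade0 r =>
    rw [Algebra.algebraMap_eq_smul_one]
    exact Submodule.smul_mem _ r (Submodule.subset_span ⟨[], rfl⟩)
  | grade1 l => exact Submodule.subset_span ⟨[l], mono_singleton l⟩
  | mul a b ha hb =>
    have hmul : Set.range (mono (I := I)) * Set.range (mono (I := I)) ⊆ Set.range mono := by
      rintro _ ⟨_, ⟨u, rfl⟩, _, ⟨v, rfl⟩, rfl⟩
      exact ⟨u ++ v, mono_append u v⟩
    refine Submodule.span_mono hmul ?_
    rw [← Submodule.span_mul_span]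
    exact Submodule.mul_mem_mul ha hb
  | add a b ha hb => exact add_mem ha hb

def abGrade (n : ℕ) : Submodule ℚ (FreeAlgebra ℚ (I ⊕ Bool)) :=
  Submodule.span ℚ (mono '' {w | nab w = n})

theorem mono_mem_abGrade (w : List (I ⊕ Bool)) : mono w ∈ abGrade (nab w) :=
  Submodule.subset_span ⟨w, rfl, rfl⟩

theorem abGrade_mul_le (m n : ℕ) : abGrade (I := I) m * abGrade n ≤ abGrade (m + n) := by
  rw [abGrade, abGrade, Submodule.span_mul_span, abGrade]
  refine Submodule.span_mono ?_
  rintro _ ⟨_, ⟨u, hu, rfl⟩, _, ⟨v, hv, rfl⟩, rfl⟩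
  exact ⟨u ++ v, by simp_all [nab_append], mono_append u v⟩

theorem toSubmodule_adjoin_inl_eq_abGrade_zero :
    Subalgebra.toSubmodule (Algebra.adjoin ℚ (Set.range fun j : I => ι ℚ (Sum.inl j : I ⊕ Bool)))
      = abGrade 0 := by
  refine le_antisymm (fun z hz => ?_) (Submodule.span_le.2 ?_)
  · induction hz using Algebra.adjoin_induction with
    | mem s hs =>
      obtain ⟨j, rfl⟩ := hs
      simpa [mono_singleton, nab] using mono_mem_abGrade [(Sum.inl j : I ⊕ Bool)]
    | algebraMap r =>
      rw [Algebra.algebraMap_eq_smul_one]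
      exact Submodule.smul_mem _ r (mono_mem_abGrade [])
    | add a b _ _ ha hb => exact add_mem ha hb
    | mul a b _ _ ha hb => exact abGrade_mul_le 0 0 (Submodule.mul_mem_mul ha hb)
  · rintro _ ⟨w, hw, rfl⟩
    refine Subalgebra.list_prod_mem _ fun x hx => ?_
    obtain ⟨l, hl, rfl⟩ := List.mem_map.1 hx
    cases l with
    | inl i => exact Algebra.subset_adjoin ⟨i, rfl⟩
    | inr c => exact absurd rfl (List.countP_eq_zero.1 hw _ hl)

/-- Uniform in `n` because `(0 : ℚ)⁻¹ = 0`. -/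
theorem eq_inv_smul_of_mem_abGrade
    {h e : FreeAlgebra ℚ (I ⊕ Bool) →ₗ[ℚ] FreeAlgebra ℚ (I ⊕ Bool)}
    (hh : ∀ w, h (mono w) = if nab w = 0 then 0 else (nab w : ℚ)⁻¹ • e (mono w))
    {n : ℕ} {z : FreeAlgebra ℚ (I ⊕ Bool)} (hz : z ∈ abGrade n) : h z = (n : ℚ)⁻¹ • e z := by
  induction hz using Submodule.span_induction with
  | mem _ hz =>
    obtain ⟨w, rfl, rfl⟩ := hz
    rw [hh]
    split_ifs with hw <;> simp [hw]
  | zero => simp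
  | add a b _ _ ha hb => rw [map_add, map_add, ha, hb, smul_add]
  | smul c a _ ha => rw [map_smul, map_smul, ha, smul_comm]

theorem apply_mono_eq_nab_smul {D : FreeAlgebra ℚ (I ⊕ Bool) →ₗ[ℚ] FreeAlgebra ℚ (I ⊕ Bool)}
    (hD : ∀ z y, D (z * y) = D z * y + z * D y) (hx : ∀ i, D (ι ℚ (Sum.inl i)) = 0)
    (hab : ∀ c, D (ι ℚ (Sum.inr c)) = ι ℚ (Sum.inr c)) (w : List (I ⊕ Bool)) :
    D (mono w) = (nab w : ℚ) • mono w := by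
  induction w with
  | nil => simpa [mono, nab] using hD 1 1
  | cons l u ih =>
    rw [mono_cons, hD, ih]
    cases l with
    | inl i => simp [hx, nab]
    | inr c =>
      simp only [hab, nab, mul_smul_comm, List.countP_cons, Sum.isRight_inr, ↓reduceIte,
        Nat.cast_add, Nat.cast_one]
      module

end Words

section Parity

variable {I : Type*} (g : (I ⊕ Bool) → ℤ)

open FreeAlgebra

noncomputable def parity : FreeAlgebra ℚ (I ⊕ Bool) →ₐ[ℚ] FreeAlgebra ℚ (I ⊕ Bool) :=
  lift ℚ fun l => ((-1 : ℚ) ^ g l) • ι ℚ l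

theorem parity_ι (l : I ⊕ Bool) : parity g (ι ℚ l) = ((-1 : ℚ) ^ g l) • ι ℚ l :=
  lift_ι_apply _ _

theorem parity_mono (w : List (I ⊕ Bool)) :
    parity g (mono w) = ((-1 : ℚ) ^ degw g w) • mono w := by
  induction w with
  | nil => simp [mono, degw]
  | cons l u ih =>
    rw [mono_cons, map_mul, parity_ι, ih, smul_mul_smul_comm, ← zpow_add₀ (by norm_num)]
    simp [degw]

theorem parity_parity (z : FreeAlgebra ℚ (I ⊕ Bool)) : parity g (parity g z) = z := by
  have : (parity g).comp (parity g) = AlgHom.id ℚ _ := by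
    ext l
    simp [parity_ι, smul_smul, ← mul_zpow]
  exact AlgHom.congr_fun this z

variable {g}

theorem isSkewDerivation_parity {d : FreeAlgebra ℚ (I ⊕ Bool) →ₗ[ℚ] FreeAlgebra ℚ (I ⊕ Bool)}
    (hd : ∀ u y, d (mono u * y) = d (mono u) * y + ((-1 : ℚ) ^ degw g u) • (mono u * d y)) :
    IsSkewDerivation (parity g) d := by
  intro z y
  have : d ∘ₗ LinearMap.mulRight ℚ y =
      LinearMap.mulRight ℚ y ∘ₗ d + LinearMap.mulRight ℚ (d y) ∘ₗ (parity g).toLinearMap :=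
    LinearMap.ext_on_range span_range_mono fun u => by simp [hd, parity_mono]
  exact LinearMap.congr_fun this z

theorem IsSkewDerivation.map_mono_mem_abGrade
    {d : FreeAlgebra ℚ (I ⊕ Bool) →ₗ[ℚ] FreeAlgebra ℚ (I ⊕ Bool)}
    (hd : IsSkewDerivation (parity g) d) (hgen : ∀ l, d (ι ℚ l) ∈ abGrade (nab [l]))
    (w : List (I ⊕ Bool)) : d (mono w) ∈ abGrade (nab w) := by
  induction w with
  | nil => simp [mono, hd.map_one_eq_zero]
  | cons l u ih =>
    rw [mono_cons, hd, parity_ι, ← List.singleton_append, nab_append]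
    have hl : ι ℚ l ∈ abGrade (nab [l]) := mono_singleton l ▸ mono_mem_abGrade [l]
    refine add_mem (abGrade_mul_le _ _ (Submodule.mul_mem_mul (hgen l) (mono_mem_abGrade u)))
      (abGrade_mul_le _ _ (Submodule.mul_mem_mul (Submodule.smul_mem _ _ hl) ih))

end Parity

section Stabilization

variable {I : Type*} {g : (I ⊕ Bool) → ℤ}
  {d hhat h τ : FreeAlgebra ℚ (I ⊕ Bool) →ₗ[ℚ] FreeAlgebra ℚ (I ⊕ Bool)}

open FreeAlgebra

theorem d_ι_mem_abGrade (hd_a : d (ι ℚ (Sum.inr true)) = ι ℚ (Sum.inr false))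
    (hd_b : d (ι ℚ (Sum.inr false)) = 0)
    (hd_x : ∀ i : I, d (ι ℚ (Sum.inl i)) ∈
      Algebra.adjoin ℚ (Set.range fun j : I => ι ℚ (Sum.inl j : I ⊕ Bool)))
    (l : I ⊕ Bool) : d (ι ℚ l) ∈ abGrade (nab [l]) := by
  rcases l with i | _ | _
  · have := hd_x i
    rw [← Subalgebra.mem_toSubmodule, toSubmodule_adjoin_inl_eq_abGrade_zero] at this
    simpa [nab] using this
  · simp [hd_b]
  · simpa [hd_a, mono_singleton, nab] using mono_mem_abGrade [(Sum.inr false : I ⊕ Bool)]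

theorem hhat_d_add_d_hhat_mono (hg : g (Sum.inr false) = g (Sum.inr true) - 1)
    (hd : IsSkewDerivation (parity g) d)
    (hd_a : d (ι ℚ (Sum.inr true)) = ι ℚ (Sum.inr false))
    (hd_b : d (ι ℚ (Sum.inr false)) = 0)
    (hd_x : ∀ i : I, d (ι ℚ (Sum.inl i)) ∈
      Algebra.adjoin ℚ (Set.range fun j : I => ι ℚ (Sum.inl j : I ⊕ Bool)))
    (hdd : ∀ x, d (d x) = 0) (he : IsSkewDerivation (parity g) hhat)
    (hh_b : hhat (ι ℚ (Sum.inr false)) = ι ℚ (Sum.inr true))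
    (hh_a : hhat (ι ℚ (Sum.inr true)) = 0) (hh_x : ∀ i : I, hhat (ι ℚ (Sum.inl i)) = 0)
    (w : List (I ⊕ Bool)) :
    hhat (d (mono w)) + d (hhat (mono w)) = (nab w : ℚ) • mono w := by
  -- the parity of `d x_i` is not prescribed; it is forced by `d ∘ d = 0`
  have hσd : ∀ z, parity g (d z) = -d (parity g z) :=
    hd.anticomm_of_sq_eq_zero hdd (y := ι ℚ (Sum.inr true)) (by rw [hd_a]; exact ι_ne_zero _)
  have hσe : ∀ z, parity g (hhat z) = -hhat (parity g z) := by
    refine he.anticomm_of_adjoin_eq_top (adjoin_range_ι ℚ _) ?_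
    rintro _ ⟨i | _ | _, rfl⟩
    · simp [parity_ι, hh_x]
    · simp [parity_ι, hh_b, hg, zpow_sub₀, div_neg]
    · simp [parity_ι, hh_a]
  have hX : ∀ i, hhat (d (ι ℚ (Sum.inl i))) = 0 := fun i =>
    he.map_eq_zero_of_mem_adjoin (by rintro _ ⟨j, rfl⟩; exact hh_x j) (hd_x i)
  refine apply_mono_eq_nab_smul (D := hhat ∘ₗ d + d ∘ₗ hhat)
    (hd.comp_add_comp_leibniz he (parity_parity g) hσd hσe) ?_ ?_ w
  · simp [hX, hh_x]
  · rintro (_ | _) <;> simp [hd_a, hd_b, hh_a, hh_b]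

theorem comp_add_comp_eq_id_sub (hgrade : ∀ w, d (mono w) ∈ abGrade (nab w))
    (heuler : ∀ w, hhat (d (mono w)) + d (hhat (mono w)) = (nab w : ℚ) • mono w)
    (hh_def : ∀ w, h (mono w) = if nab w = 0 then 0 else (nab w : ℚ)⁻¹ • hhat (mono w))
    (hτ_def : ∀ w, τ (mono w) = if nab w = 0 then mono w else 0)
    (x : FreeAlgebra ℚ (I ⊕ Bool)) : h (d x) + d (h x) = x - τ x := by
  have : h ∘ₗ d + d ∘ₗ h = LinearMap.id - τ := by
    refine LinearMap.ext_on_range span_range_mono fun w => ?_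
    have hsum : h (d (mono w)) + d (h (mono w)) = (nab w : ℚ)⁻¹ • (nab w : ℚ) • mono w := by
      rw [eq_inv_smul_of_mem_abGrade hh_def (hgrade w),
        eq_inv_smul_of_mem_abGrade hh_def (mono_mem_abGrade w), map_smul, ← smul_add, heuler]
    simp only [LinearMap.add_apply, LinearMap.comp_apply, LinearMap.sub_apply, LinearMap.id_apply,
      hsum, hτ_def, smul_smul]
    split_ifs with hw
    · simp [hw]
    · rw [inv_mul_cancel₀ (by exact_mod_cast hw), one_smul, sub_zero]
  exact LinearMap.congr_fun this x

theorem apply_mem_abGrade_zero (hτ_def : ∀ w, τ (mono w) = if nab w = 0 then mono w else 0)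
    (x : FreeAlgebra ℚ (I ⊕ Bool)) : τ x ∈ abGrade 0 := by
  have : (⊤ : Submodule ℚ _).map τ ≤ abGrade 0 := by
    rw [← span_range_mono, Submodule.map_span_le]
    rintro _ ⟨w, rfl⟩
    rw [hτ_def]
    split_ifs with hw
    · exact hw ▸ mono_mem_abGrade w
    · exact zero_mem _
  exact this (Submodule.mem_map_of_mem Submodule.mem_top)

end Stabilization

/-- Chain homotopy for stabilization: with `d`, `ĥ` odd graded derivations on the tensor
algebra on `{x_i} ∪ {a,b}` as before (`d(a)=b`, `d(b)=0`, `d(x_i)` in the `x`-subalgebra,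
`ĥ(b)=a`, `ĥ(a)=0`, `ĥ(x_i)=0`, and `d² = 0`), define `h(w) = ĥ(w)/n(w)` when `n(w) ≠ 0`
and `h(w) = 0` otherwise, and let `τ` be the projection fixing the words without `a, b` and
killing the others. Then `h∘d + d∘h = id − τ`; in particular, the inclusion of the
`x`-subalgebra is a quasi-isomorphism: every `d`-cycle differs from a cycle in the
`x`-subalgebra by a `d`-boundary, and a cycle of the `x`-subalgebra which bounds in the big
algebra already bounds in the `x`-subalgebra. -/
theorem stabilization_chain_homotopy {I : Type*}
    (g : (I ⊕ Bool) → ℤ)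
    (hg : g (Sum.inr false) = g (Sum.inr true) - 1)
    (d hhat : FreeAlgebra ℚ (I ⊕ Bool) →ₗ[ℚ] FreeAlgebra ℚ (I ⊕ Bool))
    (hd_a : d (FreeAlgebra.ι ℚ (Sum.inr true)) = FreeAlgebra.ι ℚ (Sum.inr false))
    (hd_b : d (FreeAlgebra.ι ℚ (Sum.inr false)) = 0)
    (hd_x : ∀ i : I, d (FreeAlgebra.ι ℚ (Sum.inl i)) ∈
      Algebra.adjoin ℚ (Set.range fun j : I => FreeAlgebra.ι ℚ (Sum.inl j : I ⊕ Bool)))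
    (hd_leibniz : ∀ (u : List (I ⊕ Bool)) (y : FreeAlgebra ℚ (I ⊕ Bool)),
      d (mono u * y) = d (mono u) * y + ((-1 : ℚ) ^ degw g u) • (mono u * d y))
    (hdd : ∀ x, d (d x) = 0)
    (hh_b : hhat (FreeAlgebra.ι ℚ (Sum.inr false)) = FreeAlgebra.ι ℚ (Sum.inr true))
    (hh_a : hhat (FreeAlgebra.ι ℚ (Sum.inr true)) = 0)
    (hh_x : ∀ i : I, hhat (FreeAlgebra.ι ℚ (Sum.inl i)) = 0)
    (hh_leibniz : ∀ (u : List (I ⊕ Bool)) (y : FreeAlgebra ℚ (I ⊕ Bool)),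
      hhat (mono u * y) = hhat (mono u) * y + ((-1 : ℚ) ^ degw g u) • (mono u * hhat y))
    (h τ : FreeAlgebra ℚ (I ⊕ Bool) →ₗ[ℚ] FreeAlgebra ℚ (I ⊕ Bool))
    (hh_def : ∀ w : List (I ⊕ Bool),
      h (mono w) = if nab w = 0 then 0 else ((nab w : ℚ)⁻¹) • hhat (mono w))
    (hτ_def : ∀ w : List (I ⊕ Bool),
      τ (mono w) = if nab w = 0 then mono w else 0) :
    (∀ x : FreeAlgebra ℚ (I ⊕ Bool), h (d x) + d (h x) = x - τ x) ∧
    (∀ x : FreeAlgebra ℚ (I ⊕ Bool), d x = 0 →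
      ∃ s ∈ Algebra.adjoin ℚ (Set.range fun j : I => FreeAlgebra.ι ℚ (Sum.inl j : I ⊕ Bool)),
        d s = 0 ∧ ∃ y, x = s + d y) ∧
    (∀ s ∈ Algebra.adjoin ℚ (Set.range fun j : I => FreeAlgebra.ι ℚ (Sum.inl j : I ⊕ Bool)),
      d s = 0 → (∃ y, d y = s) →
      ∃ y' ∈ Algebra.adjoin ℚ
        (Set.range fun j : I => FreeAlgebra.ι ℚ (Sum.inl j : I ⊕ Bool)), d y' = s) := by
  have hd := isSkewDerivation_parity hd_leibniz
  have he := isSkewDerivation_parity hh_leibniz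
  have heuler := hhat_d_add_d_hhat_mono hg hd hd_a hd_b hd_x hdd he hh_b hh_a hh_x
  have hgrade := hd.map_mono_mem_abGrade (d_ι_mem_abGrade hd_a hd_b hd_x)
  have hom := comp_add_comp_eq_id_sub hgrade heuler hh_def hτ_def
  have hτ := apply_mem_abGrade_zero hτ_def
  have hp : ∀ s ∈ abGrade 0, h s = 0 := fun s hs => by
    simpa using eq_inv_smul_of_mem_abGrade hh_def hs
  simp only [← Subalgebra.mem_toSubmodule, toSubmodule_adjoin_inl_eq_abGrade_zero]
  refine ⟨hom, fun x hx => exists_cycle_mem_add_boundary hom hdd hτ hx, ?_⟩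
  rintro _ hs - ⟨y, rfl⟩
  exact exists_preimage_mem_of_boundary hom hdd hτ hp hs
end
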